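/- arXiv:1002.0143 — 2 statements merged into one kernel-verified Lean document; each statement's English description precedes it below -/
import Mathlib

section
/- Let ψ ∈ L²(ℝᵈ) and b ∈ C₀(ℝᵈ) (continuous with compact support). Then the operator C defined by (Cu)(x) = ∫_{ℝᵈ} (b(x) − b(y)) ψ(x−y) u(y) dy is a compact operator from the space of essentially bounded functions with support in a fixed compact set K ⊂ ℝᵈ (with the L∞ norm) into L^{p₀}(V) for every relatively compact open set V ⊂ ℝᵈ and every p₀ ≥ 1. More precisely: if (uₙ) is a bounded sequence in L∞(ℝᵈ) with supp uₙ ⊂ K for all n and uₙ ⇀ 0 weak-* in L∞, then ∫_V |C uₙ(x)|^{p₀} dx → 0 as n → ∞. -/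
open MeasureTheory Filter Topology
open scoped ENNReal

/-! For fixed `x` the kernel `y ↦ (b x - b y) ψ (x - y) 𝟙_K y` is integrable, so weak-* convergence
gives `C uₙ x → 0` pointwise. Hölder's inequality on `K` bounds `‖C uₙ x‖` by
`2 ‖b‖∞ M ‖ψ‖₂ |K|^{1/2}`, uniformly in `x` and `n`, and dominated convergence on the
finite-measure set `V` concludes. -/

theorem tendsto_setIntegral_norm_rpow_of_bounded {α E : Type*} [MeasurableSpace α]
    [NormedAddCommGroup E] {μ : Measure α} {s : Set α} (hs : μ s ≠ ∞) {F : ℕ → α → E}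
    (hF : ∀ n, AEStronglyMeasurable (F n) μ) {C : ℝ} (hC : ∀ n x, ‖F n x‖ ≤ C)
    (hlim : ∀ x, Tendsto (fun n => F n x) atTop (𝓝 0)) {p : ℝ} (hp : 0 < p) :
    Tendsto (fun n => ∫ x in s, ‖F n x‖ ^ p ∂μ) atTop (𝓝 0) := by
  have hlim_rpow (x : α) : Tendsto (fun n => ‖F n x‖ ^ p) atTop (𝓝 0) := by
    simpa [Real.zero_rpow hp.ne'] using (hlim x).norm.rpow_const (Or.inr hp.le)
  have hbound (n : ℕ) (x : α) : ‖‖F n x‖ ^ p‖ ≤ C ^ p := by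
    rw [Real.norm_of_nonneg (by positivity)]
    exact Real.rpow_le_rpow (norm_nonneg _) (hC n x) hp.le
  simpa using tendsto_integral_of_dominated_convergence (fun _ => C ^ p)
    (fun n => ((Real.continuous_rpow_const hp.le).comp_aestronglyMeasurable (hF n).norm).restrict)
    (integrableOn_const hs) (fun n => ae_of_all _ (hbound n)) (ae_of_all _ hlim_rpow)

section Translate

variable {G E : Type*} [MeasurableSpace G] [AddGroup G] [MeasurableAdd G] [MeasurableNeg G]
  {μ : Measure G} [μ.IsAddLeftInvariant] [μ.IsNegInvariant] [NormedAddCommGroup E] {ψ : G → E}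

theorem eLpNorm_restrict_comp_sub_left_le {p q : ℝ≥0∞} (hpq : p ≤ q)
    (hψ : AEStronglyMeasurable ψ μ) (x : G) (K : Set G) :
    eLpNorm (fun y => ψ (x - y)) p (μ.restrict K)
      ≤ eLpNorm ψ q μ * μ K ^ (1 / p.toReal - 1 / q.toReal) := by
  have hψx : AEStronglyMeasurable (fun y => ψ (x - y)) μ :=
    hψ.comp_measurePreserving (Measure.measurePreserving_sub_left μ x)
  calc eLpNorm (fun y => ψ (x - y)) p (μ.restrict K)
      ≤ eLpNorm (fun y => ψ (x - y)) q (μ.restrict K) * μ K ^ (1 / p.toReal - 1 / q.toReal) := by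
        simpa using eLpNorm_le_eLpNorm_mul_rpow_measure_univ hpq hψx.restrict
    _ ≤ eLpNorm (fun y => ψ (x - y)) q μ * μ K ^ (1 / p.toReal - 1 / q.toReal) := by
        gcongr
        exact Measure.restrict_le_self
    _ = eLpNorm ψ q μ * μ K ^ (1 / p.toReal - 1 / q.toReal) := by
        rw [← eLpNorm_comp_measurePreserving hψ (Measure.measurePreserving_sub_left μ x)]
        rfl

theorem integrableOn_comp_sub_left {q : ℝ≥0∞} (hq : 1 ≤ q) (hψ : MemLp ψ q μ) (x : G)
    {K : Set G} (hK : μ K ≠ ∞) : IntegrableOn (fun y => ψ (x - y)) K μ := by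
  have := isFiniteMeasure_restrict.2 hK
  exact ((hψ.comp_measurePreserving (Measure.measurePreserving_sub_left μ x)).restrict K).integrable hq

theorem exists_bound_setIntegral_norm_comp_sub_left {q : ℝ≥0∞} (hq : 1 ≤ q) (hψ : MemLp ψ q μ)
    {K : Set G} (hK : μ K ≠ ∞) : ∃ C, ∀ x, ∫ y in K, ‖ψ (x - y)‖ ∂μ ≤ C := by
  have hexp : 0 ≤ 1 - 1 / q.toReal := by
    rcases eq_or_ne q ∞ with rfl | hq_top
    · simp
    · have hq_real : 1 ≤ q.toReal := by simpa using ENNReal.toReal_mono hq_top hq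
      exact sub_nonneg.2 (div_le_one_of_le₀ hq_real ENNReal.toReal_nonneg)
  refine ⟨(eLpNorm ψ q μ * μ K ^ (1 - 1 / q.toReal)).toReal, fun x => ?_⟩
  have hψx : AEStronglyMeasurable (fun y => ψ (x - y)) μ :=
    hψ.1.comp_measurePreserving (Measure.measurePreserving_sub_left μ x)
  rw [integral_norm_eq_lintegral_enorm hψx.restrict, ← eLpNorm_one_eq_lintegral_enorm]
  refine ENNReal.toReal_mono (ENNReal.mul_ne_top hψ.2.ne (ENNReal.rpow_ne_top_of_nonneg hexp hK)) ?_
  simpa using eLpNorm_restrict_comp_sub_left_le hq hψ.1 x K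

end Translate

section Commutator

variable {G 𝕜 : Type*} [MeasurableSpace G] [RCLike 𝕜] {μ : Measure G}

/-- The operator `C` of the statement: the commutator `[b, ψ ∗ ·]`. -/
noncomputable def convCommutator [Sub G] (μ : Measure G) (b ψ u : G → 𝕜) (x : G) : 𝕜 :=
  ∫ y, (b x - b y) * ψ (x - y) * u y ∂μ

theorem convCommutator_eq_integral_mul_indicator [Sub G] {b ψ u : G → 𝕜} {K : Set G}
    (hu : Function.support u ⊆ K) (x : G) :
    convCommutator μ b ψ u x = ∫ y, u y * K.indicator (fun y => (b x - b y) * ψ (x - y)) y ∂μ := by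
  refine integral_congr_ae (ae_of_all _ fun y => ?_)
  by_cases hy : y ∈ K
  · simp only [Set.indicator_of_mem hy]
    ring
  · simp [Function.notMem_support.1 (mt (@hu y) hy)]

theorem norm_convCommutator_le [Sub G] {b ψ u : G → 𝕜} {B M : ℝ} {K : Set G}
    (hbB : ∀ x, ‖b x‖ ≤ B) (huM : ∀ y, ‖u y‖ ≤ M) (hu : Function.support u ⊆ K)
    (hK : MeasurableSet K) {x : G} (hψ : IntegrableOn (fun y => ψ (x - y)) K μ) :
    ‖convCommutator μ b ψ u x‖ ≤ 2 * B * M * ∫ y in K, ‖ψ (x - y)‖ ∂μ := by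
  have hB : 0 ≤ B := (norm_nonneg _).trans (hbB x)
  have hpt (y : G) : ‖(b x - b y) * ψ (x - y) * u y‖
      ≤ 2 * B * M * K.indicator (fun y => ‖ψ (x - y)‖) y := by
    by_cases hy : y ∈ K
    · rw [Set.indicator_of_mem hy, norm_mul, norm_mul]
      have hbxy : ‖b x - b y‖ ≤ 2 * B := (norm_sub_le _ _).trans (by linarith [hbB x, hbB y])
      calc ‖b x - b y‖ * ‖ψ (x - y)‖ * ‖u y‖ ≤ 2 * B * ‖ψ (x - y)‖ * M := by
            gcongr
            exact huM y
        _ = 2 * B * M * ‖ψ (x - y)‖ := by ring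
    · simp [Set.indicator_of_notMem hy, Function.notMem_support.1 (mt (@hu y) hy)]
  calc ‖convCommutator μ b ψ u x‖ ≤ ∫ y, ‖(b x - b y) * ψ (x - y) * u y‖ ∂μ :=
        norm_integral_le_integral_norm _
    _ ≤ ∫ y, 2 * B * M * K.indicator (fun y => ‖ψ (x - y)‖) y ∂μ :=
        integral_mono_of_nonneg (ae_of_all _ fun y => norm_nonneg _)
          (((integrable_indicator_iff hK).2 hψ.norm).const_mul _) (ae_of_all _ hpt)
    _ = 2 * B * M * ∫ y in K, ‖ψ (x - y)‖ ∂μ := by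
        rw [integral_const_mul, integral_indicator hK]

theorem tendsto_convCommutator_of_weakStar [Sub G] {b ψ : G → 𝕜} {B : ℝ}
    (hbB : ∀ x, ‖b x‖ ≤ B) (hb : AEStronglyMeasurable b μ) {K : Set G} (hK : MeasurableSet K)
    {u : ℕ → G → 𝕜} (hu : ∀ n, Function.support (u n) ⊆ K)
    (hweak : ∀ g : G → 𝕜, Integrable g μ → Tendsto (fun n => ∫ y, u n y * g y ∂μ) atTop (𝓝 0))
    {x : G} (hψ : IntegrableOn (fun y => ψ (x - y)) K μ) :
    Tendsto (fun n => convCommutator μ b ψ (u n) x) atTop (𝓝 0) := by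
  have hkernel : Integrable (K.indicator fun y => (b x - b y) * ψ (x - y)) μ :=
    (integrable_indicator_iff hK).2 (hψ.bdd_mul (aestronglyMeasurable_const.sub hb).restrict
      (ae_of_all _ fun y => (norm_sub_le _ _).trans (add_le_add (hbB x) (hbB y))))
  simpa only [convCommutator_eq_integral_mul_indicator (hu _)] using hweak _ hkernel

theorem aestronglyMeasurable_convCommutator [AddGroup G] [MeasurableAdd₂ G] [MeasurableNeg G]
    [SFinite μ] [μ.IsAddLeftInvariant] {b ψ u : G → 𝕜} (hb : AEStronglyMeasurable b μ)
    (hψ : AEStronglyMeasurable ψ μ) (hu : AEStronglyMeasurable u μ) :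
    AEStronglyMeasurable (convCommutator μ b ψ u) μ :=
  (((hb.comp_fst.sub hb.comp_snd).mul
    (hψ.comp_quasiMeasurePreserving (quasiMeasurePreserving_sub μ μ))).mul
      hu.comp_snd).integral_prod_right'

end Commutator

theorem stmt0_general
    {d : ℕ} (ψ b : EuclideanSpace ℝ (Fin d) → ℂ)
    (hψ : MemLp ψ 2 (volume : Measure (EuclideanSpace ℝ (Fin d))))
    (hb : Continuous b) (hbsupp : HasCompactSupport b)
    (K : Set (EuclideanSpace ℝ (Fin d))) (hK : IsCompact K)
    (u : ℕ → EuclideanSpace ℝ (Fin d) → ℂ)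
    (hum : ∀ n, Measurable (u n))
    (M : ℝ) (hbdd : ∀ n x, ‖u n x‖ ≤ M)
    (hsupp : ∀ n, Function.support (u n) ⊆ K)
    (hweak : ∀ g : EuclideanSpace ℝ (Fin d) → ℂ, Integrable g →
      Tendsto (fun n => ∫ y, u n y * g y) atTop (nhds 0))
    (V : Set (EuclideanSpace ℝ (Fin d)))
    (hVc : IsCompact (closure V)) (p₀ : ℝ) (hp₀ : 1 ≤ p₀) :
    Tendsto
      (fun n => ∫ x in V, ‖∫ y, (b x - b y) * ψ (x - y) * u n y‖ ^ p₀)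
      atTop (nhds 0) := by
  obtain ⟨B, hbB⟩ := hbsupp.exists_bound_of_continuous hb
  have hKm : MeasurableSet K := hK.measurableSet
  have hKfin : volume K ≠ ∞ := hK.measure_lt_top.ne
  have hψx (x) := integrableOn_comp_sub_left one_le_two hψ x hKfin
  obtain ⟨C, hC⟩ := exists_bound_setIntegral_norm_comp_sub_left one_le_two hψ hKfin
  have hbound (n x) : ‖convCommutator volume b ψ (u n) x‖ ≤ 2 * B * M * C := by
    have hM : 0 ≤ M := (norm_nonneg _).trans (hbdd 0 0)
    have hB : 0 ≤ B := (norm_nonneg _).trans (hbB 0)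
    calc ‖convCommutator volume b ψ (u n) x‖ ≤ 2 * B * M * ∫ y in K, ‖ψ (x - y)‖ :=
          norm_convCommutator_le hbB (hbdd n) (hsupp n) hKm (hψx x)
      _ ≤ 2 * B * M * C := by gcongr; exact hC x
  exact tendsto_setIntegral_norm_rpow_of_bounded
    ((measure_mono subset_closure).trans_lt hVc.measure_lt_top).ne
    (fun n => aestronglyMeasurable_convCommutator hb.aestronglyMeasurable hψ.1
      (hum n).aestronglyMeasurable)
    hbound
    (fun x => tendsto_convCommutator_of_weakStar hbB hb.aestronglyMeasurable hKm hsupp hweak (hψx x))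
    (by linarith)

/-- If `ψ ∈ L²(ℝᵈ)`, `b` is continuous with compact support,
`(uₙ)` is bounded in `L∞`, supported in a fixed compact `K`, and `uₙ ⇀ 0`
weak-* in `L∞` (i.e. against all `L¹` test functions), then for every
relatively compact open `V` and every `p₀ ≥ 1`,
`∫_V ‖(C uₙ)(x)‖^{p₀} dx → 0`, where
`(C u)(x) = ∫ (b x − b y) ψ(x−y) u y dy`. -/
theorem stmt0
    {d : ℕ} (ψ b : EuclideanSpace ℝ (Fin d) → ℂ)
    (hψ : MemLp ψ 2 (volume : Measure (EuclideanSpace ℝ (Fin d))))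
    (hb : Continuous b) (hbsupp : HasCompactSupport b)
    (K : Set (EuclideanSpace ℝ (Fin d))) (hK : IsCompact K)
    (u : ℕ → EuclideanSpace ℝ (Fin d) → ℂ)
    (hum : ∀ n, Measurable (u n))
    (M : ℝ) (hbdd : ∀ n x, ‖u n x‖ ≤ M)
    (hsupp : ∀ n, Function.support (u n) ⊆ K)
    (hweak : ∀ g : EuclideanSpace ℝ (Fin d) → ℂ, Integrable g →
      Tendsto (fun n => ∫ y, u n y * g y) atTop (nhds 0))
    (V : Set (EuclideanSpace ℝ (Fin d))) (hV : IsOpen V)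
    (hVc : IsCompact (closure V)) (p₀ : ℝ) (hp₀ : 1 ≤ p₀) :
    Tendsto
      (fun n => ∫ x in V, ‖∫ y, (b x - b y) * ψ (x - y) * u n y‖ ^ p₀)
      atTop (nhds 0) :=
  stmt0_general ψ b hψ hb hbsupp K hK u hum M hbdd hsupp hweak V hVc p₀ hp₀
end

section
/- Let d be odd, κ = ⌊d/2⌋ + 1 (so that d + 1 − 2κ = 0, i.e., κ = (d+1)/2), and suppose ā_j ∈ L²(ℝᵈ) are functions such that for all s > 0, ∫_{‖x‖>s} |ā_j(x)| dx ≤ C₁ k (2^j s)^{d/2 − κ}, and set Ā_n = ∑_{j=0}^n ā_j. Then sup_n ∫_{‖x‖<s} ‖x‖ |Ā_n(x)| dx → 0 as s → 0. -/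
/-!
Layer cake: `∫_{‖x‖<s} ‖x‖ g(x) dx = ∫₀ˢ (∫_{t<‖x‖<s} g) dt`, so an exterior bound `A t^r`
with `r > -1` gives `∫_{‖x‖<s} ‖x‖ g ≤ A s^{r+1}/(r+1)`. For `ā_j` the constant is
`C₁ k 2^{jr}`, and for `d` odd the exponent is `r = d/2 - κ = -1/2`, so these constants form a
convergent geometric series and `sup_n ∫_{‖x‖<s} ‖x‖ |Ā_n| = O(√s)`.
-/

open MeasureTheory Real
open scoped ENNReal

open Set in
theorem lintegral_ofReal_le_of_meas_lt_le_rpow {α : Type*} [MeasurableSpace α] {ν : Measure α}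
    {f : α → ℝ} (hf0 : 0 ≤ f) (hf : Measurable f) {A r s : ℝ} (hA : 0 ≤ A) (hr : -1 < r)
    (hs : 0 ≤ s) (hfs : ∀ᵐ x ∂ν, f x < s)
    (htail : ∀ t, 0 < t → ν {x | t < f x} ≤ ENNReal.ofReal (A * t ^ r)) :
    ∫⁻ x, ENNReal.ofReal (f x) ∂ν ≤ ENNReal.ofReal (A * s ^ (r + 1) / (r + 1)) := by
  have htail_zero : ∀ t ∈ Ioi s, ν {x | t < f x} = 0 := fun t ht =>
    measure_mono_null (fun x (hx : t < f x) (hxs : f x < s) => (ht.trans (hx.trans hxs)).false)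
      hfs
  have hpow_int : IntegrableOn (fun t => A * t ^ r) (Ioc 0 s) :=
    ((intervalIntegral.intervalIntegrable_rpow' hr).1).const_mul A
  calc ∫⁻ x, ENNReal.ofReal (f x) ∂ν = ∫⁻ t in Ioi 0, ν {x | t < f x} :=
        lintegral_eq_lintegral_meas_lt ν (ae_of_all _ hf0) hf.aemeasurable
    _ = ∫⁻ t in Ioc 0 s, ν {x | t < f x} := by
        rw [← Ioc_union_Ioi_eq_Ioi hs, lintegral_union measurableSet_Ioi
          (Ioc_disjoint_Ioi le_rfl), setLIntegral_congr_fun measurableSet_Ioi htail_zero,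
          lintegral_zero, add_zero]
    _ ≤ ∫⁻ t in Ioc 0 s, ENNReal.ofReal (A * t ^ r) :=
        setLIntegral_mono' measurableSet_Ioc fun t ht => htail t ht.1
    _ = ENNReal.ofReal (∫ t in (0)..s, A * t ^ r) := by
        rw [intervalIntegral.integral_of_le hs, ofReal_integral_eq_lintegral_ofReal hpow_int
          ((ae_restrict_iff' measurableSet_Ioc).2 (ae_of_all _ fun t ht =>
            mul_nonneg hA (rpow_nonneg ht.1.le r)))]
    _ = ENNReal.ofReal (A * s ^ (r + 1) / (r + 1)) := by
        rw [intervalIntegral.integral_const_mul, integral_rpow (Or.inl hr),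
          zero_rpow (by linarith), sub_zero, mul_div_assoc]

theorem setLIntegral_norm_mul_le_of_exterior_bound {E : Type*} [NormedAddCommGroup E]
    [MeasurableSpace E] [OpensMeasurableSpace E] {μ : Measure E} {g : E → ℝ≥0∞}
    (hg : Measurable g) {A r s : ℝ} (hA : 0 ≤ A) (hr : -1 < r) (hs : 0 ≤ s)
    (hext : ∀ t, 0 < t → ∫⁻ x in {x | t < ‖x‖}, g x ∂μ ≤ ENNReal.ofReal (A * t ^ r)) :
    ∫⁻ x in {x | ‖x‖ < s}, ‖x‖ₑ * g x ∂μ ≤ ENNReal.ofReal (A * s ^ (r + 1) / (r + 1)) := by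
  have hball : MeasurableSet {x : E | ‖x‖ < s} :=
    measurableSet_lt measurable_norm measurable_const
  set ν := (μ.restrict {x | ‖x‖ < s}).withDensity g
  have hν : ∫⁻ x in {x | ‖x‖ < s}, ‖x‖ₑ * g x ∂μ = ∫⁻ x, ENNReal.ofReal ‖x‖ ∂ν := by
    simp only [ν, ofReal_norm, lintegral_withDensity_eq_lintegral_mul _ hg measurable_enorm,
      Pi.mul_apply, mul_comm]
  rw [hν]
  refine lintegral_ofReal_le_of_meas_lt_le_rpow (fun x => norm_nonneg x) measurable_norm hA hr
    hs    (withDensity_absolutelyContinuous _ _ (ae_restrict_mem hball)) fun t ht => ?_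
  calc ν {x | t < ‖x‖} = ∫⁻ x in {x | t < ‖x‖}, g x ∂μ.restrict {x | ‖x‖ < s} :=
        withDensity_apply _ (measurableSet_lt measurable_const measurable_norm)
    _ ≤ ∫⁻ x in {x | t < ‖x‖}, g x ∂μ :=
        lintegral_mono' (Measure.restrict_mono le_rfl Measure.restrict_le_self) le_rfl
    _ ≤ _ := hext t ht

theorem setLIntegral_norm_mul_sum_le_of_exterior_bound {E : Type*} [NormedAddCommGroup E]
    [MeasurableSpace E] [OpensMeasurableSpace E] {μ : Measure E} {g : ℕ → E → ℝ≥0∞}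
    (hg : ∀ j, Measurable (g j)) {A b r s : ℝ} (hA : 0 ≤ A) (hb : 1 < b) (hr : -1 < r)
    (hr0 : r < 0) (hs : 0 ≤ s)
    (hext : ∀ j t, 0 < t →
      ∫⁻ x in {x | t < ‖x‖}, g j x ∂μ ≤ ENNReal.ofReal (A * (b ^ j * t) ^ r)) (n : ℕ) :
    ∫⁻ x in {x | ‖x‖ < s}, ‖x‖ₑ * ∑ j ∈ Finset.range n, g j x ∂μ
      ≤ ENNReal.ofReal (A * s ^ (r + 1) / ((r + 1) * (1 - b ^ r))) := by
  have hb0 : 0 ≤ b := by linarith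
  have hq0 : 0 ≤ b ^ r := rpow_nonneg hb0 r
  have hq1 : b ^ r < 1 := rpow_lt_one_of_one_lt_of_neg hb hr0
  have hterm : ∀ j : ℕ, ∫⁻ x in {x | ‖x‖ < s}, ‖x‖ₑ * g j x ∂μ
      ≤ ENNReal.ofReal (A * (b ^ r) ^ j * s ^ (r + 1) / (r + 1)) := by
    refine fun j => setLIntegral_norm_mul_le_of_exterior_bound (hg j) (by positivity) hr hs
      fun t ht => ?_
    have hbj : (b ^ j) ^ r = (b ^ r) ^ j := by
      rw [← rpow_natCast, ← rpow_mul hb0, mul_comm, rpow_mul_natCast hb0]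
    simpa only [mul_rpow (pow_nonneg hb0 j) ht.le, hbj, mul_assoc] using hext j t ht
  have hgeom : ∑ j ∈ Finset.range n, (b ^ r) ^ j ≤ 1 / (1 - b ^ r) := by
    have := geom_sum_Ico_le_of_lt_one (m := 0) (n := n) hq0 hq1
    rwa [← Finset.range_eq_Ico, pow_zero] at this
  have hC : 0 ≤ A * s ^ (r + 1) / (r + 1) := div_nonneg (by positivity) (by linarith)
  simp_rw [Finset.mul_sum]
  rw [lintegral_finsetSum (f := fun j x => ‖x‖ₑ * g j x) _
    fun j _ => measurable_enorm.mul (hg j)]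
  calc ∑ j ∈ Finset.range n, ∫⁻ x in {x | ‖x‖ < s}, ‖x‖ₑ * g j x ∂μ
      ≤ ∑ j ∈ Finset.range n, ENNReal.ofReal (A * (b ^ r) ^ j * s ^ (r + 1) / (r + 1)) :=
        Finset.sum_le_sum fun j _ => hterm j
    _ = ENNReal.ofReal (A * s ^ (r + 1) / (r + 1) * ∑ j ∈ Finset.range n, (b ^ r) ^ j) := by
        rw [Finset.mul_sum, ENNReal.ofReal_sum_of_nonneg fun j _ => by positivity]
        simp only [mul_right_comm, mul_div_right_comm]
    _ ≤ ENNReal.ofReal (A * s ^ (r + 1) / (r + 1) * (1 / (1 - b ^ r))) :=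
        ENNReal.ofReal_le_ofReal (mul_le_mul_of_nonneg_left hgeom hC)
    _ = _ := by rw [mul_one_div, div_div]

theorem exists_pos_forall_mul_rpow_le {c p ε : ℝ} (hc : 0 ≤ c) (hp : 0 < p) (hε : 0 < ε) :
    ∃ s₀, 0 < s₀ ∧ ∀ s, 0 < s → s ≤ s₀ → c * s ^ p ≤ ε := by
  refine ⟨(ε / (c + 1)) ^ p⁻¹, by positivity, fun s hs hss => ?_⟩
  have hsp : s ^ p ≤ ε / (c + 1) := by
    calc s ^ p ≤ ((ε / (c + 1)) ^ p⁻¹) ^ p := rpow_le_rpow hs.le hss hp.le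
      _ = ε / (c + 1) := rpow_inv_rpow (by positivity) hp.ne'
  calc c * s ^ p ≤ c * (ε / (c + 1)) := mul_le_mul_of_nonneg_left hsp hc
    _ ≤ ε := by
        rw [mul_div_assoc', div_le_iff₀ (by linarith)]
        nlinarith

theorem stmt5_general
    {d : ℕ} (hd : Odd d) (κ : ℕ) (hκ : κ = d / 2 + 1)
    (k C₁ : ℝ) (hk : 0 < k) (hC₁ : 0 ≤ C₁)
    (abar : ℕ → EuclideanSpace ℝ (Fin d) → ℂ)
    (hmeas : ∀ j, Measurable (abar j))
    (hbd : ∀ (j : ℕ) (s : ℝ), 0 < s →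
      (∫⁻ x in {x : EuclideanSpace ℝ (Fin d) | s < ‖x‖}, ‖abar j x‖₊)
        ≤ ENNReal.ofReal (C₁ * k * ((2 : ℝ) ^ j * s) ^ ((d : ℝ) / 2 - κ))) :
    ∀ ε : ℝ, 0 < ε → ∃ s₀ : ℝ, 0 < s₀ ∧ ∀ s : ℝ, 0 < s → s ≤ s₀ → ∀ n : ℕ,
      (∫⁻ x in {x : EuclideanSpace ℝ (Fin d) | ‖x‖ < s},
          (‖x‖₊ : ℝ≥0∞) * ‖∑ j ∈ Finset.range (n + 1), abar j x‖₊)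
        ≤ ENNReal.ofReal ε := by
  have hexp : (d : ℝ) / 2 - κ = -(1 / 2) := by
    obtain ⟨t, rfl⟩ := hd
    rw [hκ, show (2 * t + 1) / 2 = t by omega]
    push_cast
    ring
  rw [hexp] at hbd
  have hq : (2 : ℝ) ^ (-(1 / 2) : ℝ) < 1 :=
    rpow_lt_one_of_one_lt_of_neg one_lt_two (by norm_num)
  intro ε hε
  obtain ⟨s₀, hs₀, hs₀ε⟩ := exists_pos_forall_mul_rpow_le (p := -(1 / 2) + 1)
    (c := C₁ * k / ((-(1 / 2) + 1) * (1 - 2 ^ (-(1 / 2) : ℝ))))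
    (div_nonneg (by positivity) (mul_nonneg (by norm_num) (by linarith))) (by norm_num) hε
  refine ⟨s₀, hs₀, fun s hs hss n => ?_⟩
  calc _ ≤ ∫⁻ x in {x | ‖x‖ < s}, ‖x‖ₑ * ∑ j ∈ Finset.range (n + 1), ‖abar j x‖ₑ :=
        lintegral_mono fun x => mul_le_mul_right (enorm_sum_le _ _) _
    _ ≤ _ := setLIntegral_norm_mul_sum_le_of_exterior_bound (fun j => (hmeas j).enorm)
        (by positivity) one_lt_two (by norm_num) (by norm_num) hs.le hbd (n + 1)
    _ ≤ ENNReal.ofReal ε := by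
        rw [mul_div_right_comm]
        exact ENNReal.ofReal_le_ofReal (hs₀ε s hs hss)

/-- (`d` odd.) If each `ā_j` satisfies the exterior `L¹`
bound `∫_{‖x‖>s}|ā_j| ≤ C₁ k (2^j s)^{d/2−κ}` for all `s > 0`, then for the
partial sums `Ā_n = ∑_{j=0}^n ā_j` we have
`sup_n ∫_{‖x‖<s} ‖x‖ |Ā_n(x)| dx → 0` as `s → 0`. -/
theorem stmt5
    {d : ℕ} (hd : Odd d) (κ : ℕ) (hκ : κ = d / 2 + 1)
    (k C₁ : ℝ) (hk : 0 < k) (hC₁ : 0 ≤ C₁)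
    (abar : ℕ → EuclideanSpace ℝ (Fin d) → ℂ)
    (hmeas : ∀ j, Measurable (abar j))
    (hL2 : ∀ j, MemLp (abar j) 2 (volume : Measure (EuclideanSpace ℝ (Fin d))))
    (hbd : ∀ (j : ℕ) (s : ℝ), 0 < s →
      (∫⁻ x in {x : EuclideanSpace ℝ (Fin d) | s < ‖x‖}, ‖abar j x‖₊)
        ≤ ENNReal.ofReal (C₁ * k * ((2 : ℝ) ^ j * s) ^ ((d : ℝ) / 2 - κ))) :
    ∀ ε : ℝ, 0 < ε → ∃ s₀ : ℝ, 0 < s₀ ∧ ∀ s : ℝ, 0 < s → s ≤ s₀ → ∀ n : ℕ,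
      (∫⁻ x in {x : EuclideanSpace ℝ (Fin d) | ‖x‖ < s},
          (‖x‖₊ : ℝ≥0∞) * ‖∑ j ∈ Finset.range (n + 1), abar j x‖₊)
        ≤ ENNReal.ofReal ε :=
  stmt5_general hd κ hκ k C₁ hk hC₁ abar hmeas hbd
end
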